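/- Let T, S be bounded linear operators on H admitting A-adjoints T♯, S♯ respectively. Set β₁ = ‖S‖_A·√( w_A(T)² − |‖Re_A(T) + Im_A(T)‖_A² − ‖Re_A(T) − Im_A(T)‖_A²|/4 ) and β₂ = ‖T‖_A·√( w_A(S)² − |‖Re_A(S) + Im_A(S)‖_A² − ‖Re_A(S) − Im_A(S)‖_A²|/4 ). Then w_A(T∘S ± S∘T) ≤ 2√2 · min{β₁, β₂}, for both choices of sign. -/

import Mathlib

noncomputable section

open Complex ContinuousLinearMap

variable {H : Type*} [NormedAddCommGroup H] [InnerProductSpace ℂ H] [CompleteSpace H]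

/-- The `A`-inner product `⟨x, y⟩_A = ⟨A x, y⟩`. -/
def innA (A : H →L[ℂ] H) (x y : H) : ℂ := @inner ℂ _ _ (A x) y

/-- The `A`-seminorm `‖x‖_A = √⟨A x, x⟩`. -/
def vnormA (A : H →L[ℂ] H) (x : H) : ℝ := Real.sqrt (innA A x x).re

/-- The `A`-operator seminorm `‖T‖_A = sup {‖T x‖_A : ‖x‖_A = 1}`. -/
def opnormA (A T : H →L[ℂ] H) : ℝ :=
  sSup {r : ℝ | ∃ x : H, vnormA A x = 1 ∧ r = vnormA A (T x)}

/-- The `A`-numerical radius `w_A(T) = sup {|⟨T x, x⟩_A| : ‖x‖_A = 1}`. -/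
def wA (A T : H →L[ℂ] H) : ℝ :=
  sSup {r : ℝ | ∃ x : H, vnormA A x = 1 ∧ r = ‖innA A (T x) x‖}

/-- The `A`-numerical range `W_A(T) = {⟨T x, x⟩_A : ‖x‖_A = 1}`. -/
def WA (A T : H →L[ℂ] H) : Set ℂ :=
  {z : ℂ | ∃ x : H, vnormA A x = 1 ∧ z = innA A (T x) x}

/-- `Re_A(T) = (T + T♯)/2`, given an `A`-adjoint `Ts` of `T`. -/
def ReA (T Ts : H →L[ℂ] H) : H →L[ℂ] H := (2 : ℂ)⁻¹ • (T + Ts)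

/-- `Im_A(T) = (T - T♯)/(2i)`, given an `A`-adjoint `Ts` of `T`. -/
def ImA (T Ts : H →L[ℂ] H) : H →L[ℂ] H := (2 * Complex.I)⁻¹ • (T - Ts)

/-- `Ts` is an `A`-adjoint of `T`, i.e. `A ∘ Ts = T* ∘ A`. -/
def IsAAdjoint (A T Ts : H →L[ℂ] H) : Prop :=
  A.comp Ts = (ContinuousLinearMap.adjoint T).comp A

/-!
For an `A`-unit vector `x`, moving `T` and `S` across the `A`-inner product gives
`|⟨(TS ± ST)x, x⟩_A| ≤ ‖Sx‖_A ‖T♯x‖_A + ‖Tx‖_A ‖S♯x‖_A ≤ ‖S‖_A (‖Tx‖_A + ‖T♯x‖_A)`,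
using `‖S♯‖_A ≤ ‖S‖_A`. Since `T = Re_A T + i Im_A T` and `T♯ = Re_A T - i Im_A T`, the
parallelogram law gives `‖Tx‖_A² + ‖T♯x‖_A² = ‖(Re_A T + Im_A T)x‖_A² + ‖(Re_A T - Im_A T)x‖_A²
≤ P² + Q²`, where `P, Q` are the `A`-seminorms of `Re_A T ± Im_A T`. Both operators have the form
`e T + ē T♯` with `|e| = 1/√2`; they are `A`-selfadjoint with numerical radius at most
`√2 w_A(T)`, hence `P, Q ≤ √2 w_A(T)` and `P² + Q² + |P² - Q²| = 2 max(P², Q²) ≤ 4 w_A(T)²`.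
Exchanging `T` and `S` gives the second term of the minimum.

Throughout, `‖Tx‖_A ≤ C ‖x‖_A` for operators with an `A`-adjoint is needed for the suprema to be
meaningful; it follows from the power trick applied to the `A`-selfadjoint operator `T♯T`.
-/

open ComplexConjugate

theorem le_of_forall_pow_two_pow_le {a r M : ℝ} (hr : 0 ≤ r)
    (h : ∀ k : ℕ, a ^ 2 ^ k ≤ M * r ^ 2 ^ k) : a ≤ r := by
  by_contra! hlt
  rcases hr.eq_or_lt with rfl | hr
  · have := h 0
    simp only [pow_zero, pow_one, mul_zero] at this
    linarith
  · obtain ⟨k, hk⟩ := pow_unbounded_of_one_lt M ((one_lt_div hr).2 hlt)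
    have hle : (a / r) ^ 2 ^ k ≤ M := by
      rw [div_pow, div_le_iff₀ (by positivity)]
      exact h k
    have hmono : (a / r) ^ k ≤ (a / r) ^ 2 ^ k :=
      pow_le_pow_right₀ ((one_lt_div hr).2 hlt).le Nat.lt_two_pow_self.le
    linarith

theorem le_mul_of_sq_le_mul_of_le_pow {u : ℕ → ℝ} {M r : ℝ} (hu : ∀ n, 0 ≤ u n) (hr : 0 ≤ r)
    (hsq : ∀ n, u n ^ 2 ≤ u (2 * n) * u 0) (hgrowth : ∀ k, u (2 ^ k) ≤ M * r ^ 2 ^ k) :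
    u 1 ≤ r * u 0 := by
  rcases (hu 0).eq_or_lt with h0 | h0
  · have := hsq 1
    rw [← h0, mul_zero] at this ⊢
    exact (pow_eq_zero_iff two_ne_zero).1 (le_antisymm this (sq_nonneg _)) |>.le
  have hratio : ∀ k, (u 1 / u 0) ^ 2 ^ k ≤ u (2 ^ k) / u 0 := by
    intro k
    induction k with
    | zero => simp
    | succ k ih =>
      calc (u 1 / u 0) ^ 2 ^ (k + 1) = ((u 1 / u 0) ^ 2 ^ k) ^ 2 := by ring
        _ ≤ (u (2 ^ k) / u 0) ^ 2 := pow_le_pow_left₀ (pow_nonneg (div_nonneg (hu 1) h0.le) _) ih 2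
        _ ≤ u (2 * 2 ^ k) * u 0 / u 0 ^ 2 := by
          rw [div_pow]; gcongr; exact hsq _
        _ = u (2 ^ (k + 1)) / u 0 := by rw [pow_succ' 2 k]; field_simp
  have hle : u 1 / u 0 ≤ r := le_of_forall_pow_two_pow_le (M := M / u 0) hr fun k =>
    (hratio k).trans (by rw [div_mul_eq_mul_div]; gcongr; exact hgrowth k)
  rwa [div_le_iff₀ h0] at hle

theorem add_le_two_mul_sqrt_two_mul_sqrt {a b P Q w : ℝ}
    (hab : a ^ 2 + b ^ 2 ≤ P ^ 2 + Q ^ 2) (hP : 0 ≤ P) (hQ : 0 ≤ Q) (hPw : P ≤ √2 * w)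
    (hQw : Q ≤ √2 * w) : a + b ≤ 2 * √2 * √(w ^ 2 - |P ^ 2 - Q ^ 2| / 4) := by
  have hP2 : P ^ 2 ≤ 2 * w ^ 2 := by
    simpa [mul_pow] using pow_le_pow_left₀ hP hPw 2
  have hQ2 : Q ^ 2 ≤ 2 * w ^ 2 := by
    simpa [mul_pow] using pow_le_pow_left₀ hQ hQw 2
  have hPQ : P ^ 2 + Q ^ 2 ≤ 4 * (w ^ 2 - |P ^ 2 - Q ^ 2| / 4) := by
    rcases abs_cases (P ^ 2 - Q ^ 2) with ⟨h, _⟩ | ⟨h, _⟩ <;> rw [h] <;> linarith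
  have hB : 0 ≤ w ^ 2 - |P ^ 2 - Q ^ 2| / 4 := by nlinarith
  refine le_of_pow_le_pow_left₀ two_ne_zero (by positivity) ?_
  rw [mul_pow, mul_pow, Real.sq_sqrt zero_le_two, Real.sq_sqrt hB]
  nlinarith [sq_nonneg (a - b)]

section

variable {E : Type*} [NormedAddCommGroup E] [InnerProductSpace ℂ E]

section innA

variable (A : E →L[ℂ] E)

theorem innA_add_left (x y z : E) : innA A (x + y) z = innA A x z + innA A y z := by
  simp [innA]

theorem innA_add_right (x y z : E) : innA A x (y + z) = innA A x y + innA A x z := by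
  simp [innA]

theorem innA_sub_left (x y z : E) : innA A (x - y) z = innA A x z - innA A y z := by
  simp [innA]

theorem innA_sub_right (x y z : E) : innA A x (y - z) = innA A x y - innA A x z := by
  simp [innA]

theorem innA_smul_left (c : ℂ) (x y : E) : innA A (c • x) y = conj c * innA A x y := by
  simp [innA, mul_comm]

theorem innA_smul_right (c : ℂ) (x y : E) : innA A x (c • y) = c * innA A x y := by
  simp [innA]

theorem vnormA_smul (c : ℂ) (x : E) : vnormA A (c • x) = ‖c‖ * vnormA A x := by
  rw [vnormA, innA_smul_left, innA_smul_right, ← mul_assoc, Complex.conj_mul',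
    ← Complex.ofReal_pow, Complex.re_ofReal_mul, Real.sqrt_mul (sq_nonneg _),
    Real.sqrt_sq (norm_nonneg c), vnormA]

end innA

theorem vnormA_nonneg (A : E →L[ℂ] E) (x : E) : 0 ≤ vnormA A x := Real.sqrt_nonneg _

namespace ContinuousLinearMap.IsPositive

variable {A : E →L[ℂ] E}

/-- Its `toNorm` is `vnormA A`, so Mathlib's Cauchy–Schwarz inequality for cores applies. -/
abbrev preInnerProductCoreA (hA : A.IsPositive) : PreInnerProductSpace.Core ℂ E where
  inner := innA A
  conj_inner_symm x y := by
    simp only [innA, inner_conj_symm]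
    exact (hA.inner_left_eq_inner_right x y).symm
  re_inner_nonneg := hA.re_inner_nonneg_left
  add_left := innA_add_left A
  smul_left x y c := innA_smul_left A c x y

theorem conj_innA (hA : A.IsPositive) (x y : E) : conj (innA A x y) = innA A y x :=
  hA.preInnerProductCoreA.conj_inner_symm y x

theorem vnormA_sq (hA : A.IsPositive) (x : E) : vnormA A x ^ 2 = (innA A x x).re :=
  Real.sq_sqrt (hA.re_inner_nonneg_left x)

theorem norm_innA_self (hA : A.IsPositive) (x : E) : ‖innA A x x‖ = vnormA A x ^ 2 := by
  rw [vnormA_sq hA]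
  exact (Complex.re_eq_norm.2 (hA.inner_nonneg_left x)).symm

theorem norm_innA_le (hA : A.IsPositive) (x y : E) : ‖innA A x y‖ ≤ vnormA A x * vnormA A y :=
  @InnerProductSpace.Core.norm_inner_le_norm ℂ E _ _ _ hA.preInnerProductCoreA x y

theorem vnormA_add_sq_add_vnormA_sub_sq (hA : A.IsPositive) (x y : E) :
    vnormA A (x + y) ^ 2 + vnormA A (x - y) ^ 2 = 2 * (vnormA A x ^ 2 + vnormA A y ^ 2) := by
  simp only [vnormA_sq hA, innA_add_left, innA_add_right, innA_sub_left, innA_sub_right,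
    Complex.add_re, Complex.sub_re]
  ring

end ContinuousLinearMap.IsPositive

theorem opnormA_nonneg (A T : E →L[ℂ] E) : 0 ≤ opnormA A T :=
  Real.sSup_nonneg fun _ ⟨x, _, hr⟩ => hr ▸ vnormA_nonneg A (T x)

theorem wA_nonneg (A T : E →L[ℂ] E) : 0 ≤ wA A T :=
  Real.sSup_nonneg fun _ ⟨_, _, hr⟩ => hr ▸ norm_nonneg _

theorem opnormA_le {A T : E →L[ℂ] E} {C : ℝ} (hC : 0 ≤ C)
    (h : ∀ x, vnormA A (T x) ≤ C * vnormA A x) : opnormA A T ≤ C :=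
  Real.sSup_le (fun _ ⟨x, hx, hr⟩ => hr ▸ by simpa [hx] using h x) hC

theorem wA_le {A T : E →L[ℂ] E} {C : ℝ} (hC : 0 ≤ C)
    (h : ∀ x, vnormA A x = 1 → ‖innA A (T x) x‖ ≤ C) : wA A T ≤ C :=
  Real.sSup_le (fun _ ⟨x, hx, hr⟩ => hr ▸ h x hx) hC

theorem apply_le_sSup_mul_vnormA_pow {A : E →L[ℂ] E} {f : E → ℝ} {p : ℕ} (hp : p ≠ 0)
    (hf : ∀ (c : ℂ) x, f (c • x) = ‖c‖ ^ p * f x) {C : ℝ} (hC : ∀ x, f x ≤ C * vnormA A x ^ p)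
    (x : E) : f x ≤ sSup {r | ∃ y, vnormA A y = 1 ∧ r = f y} * vnormA A x ^ p := by
  rcases (vnormA_nonneg A x).eq_or_lt with h0 | hpos
  · simpa [← h0, zero_pow hp] using hC x
  set y := ((vnormA A x)⁻¹ : ℂ) • x
  have hy : vnormA A y = 1 := by
    rw [vnormA_smul, norm_inv, Complex.norm_real, Real.norm_of_nonneg hpos.le,
      inv_mul_cancel₀ hpos.ne']
  have hfx : f x = vnormA A x ^ p * f y := by
    rw [hf, norm_inv, Complex.norm_real, Real.norm_of_nonneg hpos.le, ← mul_assoc, ← mul_pow,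
      mul_inv_cancel₀ hpos.ne', one_pow, one_mul]
  have hbdd : BddAbove {r | ∃ y, vnormA A y = 1 ∧ r = f y} :=
    ⟨C, fun _ ⟨z, hz, hr⟩ => hr ▸ by simpa [hz] using hC z⟩
  rw [hfx, mul_comm]
  gcongr
  exact le_csSup hbdd ⟨y, hy, rfl⟩

theorem reA_add_imA_eq (T Ts : E →L[ℂ] E) :
    ReA T Ts + ImA T Ts = ((1 - I) / 2) • T + conj ((1 - I) / 2) • Ts := by
  simp only [ReA, ImA, mul_inv, Complex.inv_I, map_div₀, map_sub, map_one, Complex.conj_I,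
    Complex.conj_ofNat]
  module

theorem reA_sub_imA_eq (T Ts : E →L[ℂ] E) :
    ReA T Ts - ImA T Ts = ((1 + I) / 2) • T + conj ((1 + I) / 2) • Ts := by
  simp only [ReA, ImA, mul_inv, Complex.inv_I, map_div₀, map_add, map_one, Complex.conj_I,
    Complex.conj_ofNat]
  module

theorem two_mul_norm_one_sub_I_div_two : 2 * ‖(1 - I) / 2‖ = √2 := by
  rw [norm_div, Complex.norm_two, mul_div_cancel₀ _ two_ne_zero]
  simpa [sub_eq_add_neg, one_add_one_eq_two] using Complex.norm_add_mul_I 1 (-1)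

theorem two_mul_norm_one_add_I_div_two : 2 * ‖(1 + I) / 2‖ = √2 := by
  rw [norm_div, Complex.norm_two, mul_div_cancel₀ _ two_ne_zero]
  simpa [one_add_one_eq_two] using Complex.norm_add_mul_I 1 1

theorem reA_add_I_smul_imA (T Ts : E →L[ℂ] E) : ReA T Ts + I • ImA T Ts = T := by
  simp only [ReA, ImA, smul_smul, mul_inv, Complex.inv_I]
  match_scalars <;> ring_nf <;> norm_num

theorem reA_sub_I_smul_imA (T Ts : E →L[ℂ] E) : ReA T Ts - I • ImA T Ts = Ts := by
  simp only [ReA, ImA, smul_smul, mul_inv, Complex.inv_I]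
  match_scalars <;> ring_nf <;> norm_num

theorem vnormA_reA_add_imA_apply_sq_add_sq {A : E →L[ℂ] E} (hA : A.IsPositive) (T Ts : E →L[ℂ] E)
    (x : E) : vnormA A ((ReA T Ts + ImA T Ts) x) ^ 2 + vnormA A ((ReA T Ts - ImA T Ts) x) ^ 2
      = vnormA A (T x) ^ 2 + vnormA A (Ts x) ^ 2 := by
  rw [← congrArg (· x) (reA_add_I_smul_imA T Ts), ← congrArg (· x) (reA_sub_I_smul_imA T Ts)]
  simp only [add_apply, sub_apply, smul_apply, hA.vnormA_add_sq_add_vnormA_sub_sq, vnormA_smul,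
    Complex.norm_I, one_mul]

end

namespace IsAAdjoint

variable {A T Ts R X : H →L[ℂ] H}

theorem semiconjBy (hT : IsAAdjoint A T Ts) : SemiconjBy A Ts (adjoint T) := hT

theorem symm (hA : A.IsPositive) (hT : IsAAdjoint A T Ts) : IsAAdjoint A Ts T := by
  have h := congrArg adjoint hT
  simp only [adjoint_comp, adjoint_adjoint, hA.isSelfAdjoint.adjoint_eq] at h
  exact h.symm

theorem innA_apply_left (hA : A.IsPositive) (hT : IsAAdjoint A T Ts) (x y : H) :
    innA A (T x) y = innA A x (Ts y) := by
  have h : A (Ts y) = adjoint T (A y) := congrArg (fun U : H →L[ℂ] H => U y) hT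
  rw [innA, innA, hA.inner_left_eq_inner_right, ← adjoint_inner_right, ← h,
    hA.inner_left_eq_inner_right]

theorem adjoint_comp_self (hA : A.IsPositive) (hT : IsAAdjoint A T Ts) :
    IsAAdjoint A (Ts ∘L T) (Ts ∘L T) := by
  have h := hT.semiconjBy.mul_right (hT.symm hA).semiconjBy
  rwa [← star_eq_adjoint, ← star_eq_adjoint, ← star_mul, star_eq_adjoint] at h

theorem pow (hR : IsAAdjoint A R R) (n : ℕ) : IsAAdjoint A (R ^ n) (R ^ n) := by
  have h := hR.semiconjBy.pow_right n
  rwa [← star_eq_adjoint, ← star_pow, star_eq_adjoint] at h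

theorem smul_add_conj_smul (hA : A.IsPositive) (hT : IsAAdjoint A T Ts) (e : ℂ) :
    IsAAdjoint A (e • T + conj e • Ts) (e • T + conj e • Ts) := by
  have h := ((hT.symm hA).semiconjBy.smul_right e).add_right (hT.semiconjBy.smul_right (conj e))
  have hadj : adjoint (e • T + conj e • Ts) = e • adjoint Ts + conj e • adjoint T := by
    simp only [← star_eq_adjoint, star_add, star_smul, Complex.star_def, Complex.conj_conj]
    exact add_comm _ _
  show SemiconjBy A _ _
  rwa [hadj]

/-- Power trick: Cauchy–Schwarz gives `|⟨Rⁿx, x⟩_A|² ≤ |⟨R²ⁿx, x⟩_A| ‖x‖_A²`, while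
`|⟨Rⁿx, x⟩_A| ≤ ‖A‖ ‖x‖² ‖R‖ⁿ`; iterate along `n = 2ᵏ` and take `2ᵏ`-th roots. -/
theorem norm_innA_apply_self_le (hA : A.IsPositive) (hR : IsAAdjoint A R R) (x : H) :
    ‖innA A (R x) x‖ ≤ ‖R‖ * vnormA A x ^ 2 := by
  set u : ℕ → ℝ := fun n => ‖innA A ((R ^ n) x) x‖
  have hu0 : u 0 = vnormA A x ^ 2 := by simp [u, hA.norm_innA_self]
  have hsq : ∀ n, u n ^ 2 ≤ u (2 * n) * u 0 := by
    intro n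
    have hmove : innA A ((R ^ (2 * n)) x) x = innA A ((R ^ n) x) ((R ^ n) x) := by
      rw [two_mul, pow_add, mul_apply_eq_comp, (hR.pow n).innA_apply_left hA]
    calc u n ^ 2 ≤ (vnormA A ((R ^ n) x) * vnormA A x) ^ 2 :=
          pow_le_pow_left₀ (norm_nonneg _) (hA.norm_innA_le _ _) 2
      _ = vnormA A ((R ^ n) x) ^ 2 * u 0 := by rw [mul_pow, hu0]
      _ ≤ u (2 * n) * u 0 := by
          gcongr
          rw [hA.vnormA_sq, ← hmove]
          exact Complex.re_le_norm _
  have hgrowth : ∀ k, u (2 ^ k) ≤ (‖A‖ * ‖x‖ ^ 2) * ‖R‖ ^ 2 ^ k := by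
    intro k
    calc u (2 ^ k) ≤ ‖A ((R ^ 2 ^ k) x)‖ * ‖x‖ := norm_inner_le_norm _ _
      _ ≤ ‖A‖ * (‖R ^ 2 ^ k‖ * ‖x‖) * ‖x‖ := by
          gcongr
          exact A.le_opNorm_of_le ((R ^ 2 ^ k).le_opNorm x)
      _ ≤ ‖A‖ * (‖R‖ ^ 2 ^ k * ‖x‖) * ‖x‖ := by gcongr; exact norm_pow_le' R (Nat.two_pow_pos k)
      _ = (‖A‖ * ‖x‖ ^ 2) * ‖R‖ ^ 2 ^ k := by ring
  have h : u 1 ≤ ‖R‖ * u 0 :=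
    le_mul_of_sq_le_mul_of_le_pow (fun n => norm_nonneg _) (norm_nonneg R) hsq hgrowth
  rw [hu0] at h
  simpa [u] using h

theorem vnormA_apply_le (hA : A.IsPositive) (hT : IsAAdjoint A T Ts) (x : H) :
    vnormA A (T x) ≤ √‖Ts ∘L T‖ * vnormA A x := by
  have h := (hT.adjoint_comp_self hA).norm_innA_apply_self_le hA x
  rw [comp_apply, (hT.symm hA).innA_apply_left hA, hA.norm_innA_self] at h
  refine le_of_pow_le_pow_left₀ two_ne_zero (mul_nonneg (Real.sqrt_nonneg _) (vnormA_nonneg A x)) ?_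
  rwa [mul_pow, Real.sq_sqrt (norm_nonneg _)]

theorem vnormA_apply_le_opnormA (hA : A.IsPositive) (hT : IsAAdjoint A T Ts) (x : H) :
    vnormA A (T x) ≤ opnormA A T * vnormA A x := by
  rw [opnormA]
  simpa using apply_le_sSup_mul_vnormA_pow (f := fun x => vnormA A (T x)) one_ne_zero
    (fun c x => by simp only [map_smul, vnormA_smul, pow_one])
    (by simpa using hT.vnormA_apply_le hA) x

theorem norm_innA_apply_self_le_wA (hA : A.IsPositive) (hT : IsAAdjoint A T Ts) (x : H) :
    ‖innA A (T x) x‖ ≤ wA A T * vnormA A x ^ 2 := by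
  refine apply_le_sSup_mul_vnormA_pow (f := fun x => ‖innA A (T x) x‖) two_ne_zero
    (fun c x => by simp only [map_smul, innA_smul_left, innA_smul_right, norm_mul,
      Complex.norm_conj]; ring) (C := √‖Ts ∘L T‖) (fun z => ?_) x
  calc ‖innA A (T z) z‖ ≤ vnormA A (T z) * vnormA A z := hA.norm_innA_le _ _
    _ ≤ √‖Ts ∘L T‖ * vnormA A z * vnormA A z := by
        gcongr
        · exact vnormA_nonneg A z
        · exact hT.vnormA_apply_le hA z
    _ = √‖Ts ∘L T‖ * vnormA A z ^ 2 := by ring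

theorem vnormA_adjoint_apply_le_opnormA (hA : A.IsPositive) (hT : IsAAdjoint A T Ts) (x : H) :
    vnormA A (Ts x) ≤ opnormA A T * vnormA A x := by
  rcases (vnormA_nonneg A (Ts x)).eq_or_lt with h0 | hpos
  · rw [← h0]
    exact mul_nonneg (opnormA_nonneg A T) (vnormA_nonneg A x)
  refine le_of_mul_le_mul_right ?_ hpos
  calc vnormA A (Ts x) * vnormA A (Ts x) = (innA A x (T (Ts x))).re := by
        rw [← sq, hA.vnormA_sq, (hT.symm hA).innA_apply_left hA]
    _ ≤ vnormA A x * vnormA A (T (Ts x)) := (Complex.re_le_norm _).trans (hA.norm_innA_le _ _)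
    _ ≤ vnormA A x * (opnormA A T * vnormA A (Ts x)) := by
        gcongr
        · exact vnormA_nonneg A x
        · exact hT.vnormA_apply_le_opnormA hA _
    _ = opnormA A T * vnormA A x * vnormA A (Ts x) := by ring

theorem four_mul_re_innA_le (hA : A.IsPositive) (hX : IsAAdjoint A X X) {c : ℝ}
    (hc : ∀ z, ‖innA A (X z) z‖ ≤ c * vnormA A z ^ 2) (u v : H) :
    4 * (innA A (X u) v).re ≤ 2 * c * (vnormA A u ^ 2 + vnormA A v ^ 2) := by
  have hsymm : innA A (X v) u = conj (innA A (X u) v) := by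
    rw [hX.innA_apply_left hA, hA.conj_innA]
  have hpolar : (innA A (X (u + v)) (u + v)).re - (innA A (X (u - v)) (u - v)).re
      = 4 * (innA A (X u) v).re := by
    simp only [map_add, map_sub, innA_add_left, innA_add_right, innA_sub_left, innA_sub_right,
      hsymm, Complex.add_re, Complex.sub_re, Complex.conj_re]
    ring
  have hplus : (innA A (X (u + v)) (u + v)).re ≤ c * vnormA A (u + v) ^ 2 :=
    (Complex.re_le_norm _).trans (hc _)
  have hminus : -(innA A (X (u - v)) (u - v)).re ≤ c * vnormA A (u - v) ^ 2 :=
    (neg_le_abs _).trans ((Complex.abs_re_le_norm _).trans (hc _))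
  have hpar : c * vnormA A (u + v) ^ 2 + c * vnormA A (u - v) ^ 2
      = 2 * c * (vnormA A u ^ 2 + vnormA A v ^ 2) := by
    rw [← mul_add, hA.vnormA_add_sq_add_vnormA_sub_sq]
    ring
  linarith

/-- By polarization, `t ↦ c ‖Xy‖_A² t² - 2 ‖Xy‖_A² t + c ‖y‖_A²` is nonnegative, so its
discriminant is not positive. -/
theorem vnormA_apply_le_of_norm_innA_le (hA : A.IsPositive) (hX : IsAAdjoint A X X) {c : ℝ}
    (hc0 : 0 ≤ c) (hc : ∀ z, ‖innA A (X z) z‖ ≤ c * vnormA A z ^ 2) (y : H) :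
    vnormA A (X y) ≤ c * vnormA A y := by
  set a := vnormA A y
  set b := vnormA A (X y)
  have hquad : ∀ t : ℝ, 0 ≤ (c * b ^ 2) * (t * t) + (-2 * b ^ 2) * t + c * a ^ 2 := by
    intro t
    have h := hX.four_mul_re_innA_le hA hc y ((t : ℂ) • X y)
    rw [innA_smul_right, Complex.re_ofReal_mul, ← hA.vnormA_sq, vnormA_smul, Complex.norm_real,
      Real.norm_eq_abs, mul_pow, sq_abs] at h
    linarith
  have hdisc := discrim_le_zero hquad
  rw [discrim] at hdisc
  by_contra! hlt
  have hca : 0 ≤ c * a := mul_nonneg hc0 (vnormA_nonneg A y)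
  have hb : 0 < b := hca.trans_lt hlt
  have hsq : (c * a) ^ 2 < b ^ 2 := pow_lt_pow_left₀ hlt hca two_ne_zero
  nlinarith [mul_lt_mul_of_pos_right hsq (pow_pos hb 2)]

theorem vnormA_smul_add_conj_smul_apply_le (hA : A.IsPositive) (hT : IsAAdjoint A T Ts) (e : ℂ)
    (y : H) : vnormA A ((e • T + conj e • Ts) y) ≤ 2 * ‖e‖ * wA A T * vnormA A y := by
  refine (hT.smul_add_conj_smul hA e).vnormA_apply_le_of_norm_innA_le hA (by
    have := wA_nonneg A T; positivity) (fun z => ?_) y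
  have hconj : innA A (Ts z) z = conj (innA A (T z) z) := by
    rw [(hT.symm hA).innA_apply_left hA, hA.conj_innA]
  calc ‖innA A ((e • T + conj e • Ts) z) z‖
        = ‖conj e * innA A (T z) z + conj (conj e * innA A (T z) z)‖ := by
          rw [add_apply, smul_apply, smul_apply, innA_add_left, innA_smul_left, innA_smul_left,
            hconj, map_mul]
    _ ≤ 2 * ‖e‖ * ‖innA A (T z) z‖ := by
          refine (norm_add_le _ _).trans_eq ?_
          rw [Complex.norm_conj, norm_mul, Complex.norm_conj]
          ring
    _ ≤ 2 * ‖e‖ * (wA A T * vnormA A z ^ 2) := by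
          gcongr
          exact hT.norm_innA_apply_self_le_wA hA z
    _ = 2 * ‖e‖ * wA A T * vnormA A z ^ 2 := by ring

theorem opnormA_smul_add_conj_smul_le (hA : A.IsPositive) (hT : IsAAdjoint A T Ts) (e : ℂ) :
    opnormA A (e • T + conj e • Ts) ≤ 2 * ‖e‖ * wA A T :=
  opnormA_le (by have := wA_nonneg A T; positivity) (hT.vnormA_smul_add_conj_smul_apply_le hA e)

theorem vnormA_reA_add_imA_apply_le (hA : A.IsPositive) (hT : IsAAdjoint A T Ts) (x : H) :
    vnormA A ((ReA T Ts + ImA T Ts) x) ≤ opnormA A (ReA T Ts + ImA T Ts) * vnormA A x := by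
  rw [reA_add_imA_eq]
  exact (hT.smul_add_conj_smul hA _).vnormA_apply_le_opnormA hA x

theorem vnormA_reA_sub_imA_apply_le (hA : A.IsPositive) (hT : IsAAdjoint A T Ts) (x : H) :
    vnormA A ((ReA T Ts - ImA T Ts) x) ≤ opnormA A (ReA T Ts - ImA T Ts) * vnormA A x := by
  rw [reA_sub_imA_eq]
  exact (hT.smul_add_conj_smul hA _).vnormA_apply_le_opnormA hA x

theorem opnormA_reA_add_imA_le (hA : A.IsPositive) (hT : IsAAdjoint A T Ts) :
    opnormA A (ReA T Ts + ImA T Ts) ≤ √2 * wA A T := by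
  rw [reA_add_imA_eq, ← two_mul_norm_one_sub_I_div_two]
  exact hT.opnormA_smul_add_conj_smul_le hA _

theorem opnormA_reA_sub_imA_le (hA : A.IsPositive) (hT : IsAAdjoint A T Ts) :
    opnormA A (ReA T Ts - ImA T Ts) ≤ √2 * wA A T := by
  rw [reA_sub_imA_eq, ← two_mul_norm_one_add_I_div_two]
  exact hT.opnormA_smul_add_conj_smul_le hA _

end IsAAdjoint

theorem norm_innA_comp_add_norm_innA_comp_le {A T Ts S Ss : H →L[ℂ] H} (hA : A.IsPositive)
    (hT : IsAAdjoint A T Ts) (hS : IsAAdjoint A S Ss) (x : H) (hx : vnormA A x = 1) :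
    ‖innA A (T (S x)) x‖ + ‖innA A (S (T x)) x‖ ≤
      2 * √2 * (opnormA A S * √(wA A T ^ 2 -
        |opnormA A (ReA T Ts + ImA T Ts) ^ 2 - opnormA A (ReA T Ts - ImA T Ts) ^ 2| / 4)) := by
  have hSx : vnormA A (S x) ≤ opnormA A S := by
    simpa [hx] using hS.vnormA_apply_le_opnormA hA x
  have hSsx : vnormA A (Ss x) ≤ opnormA A S := by
    simpa [hx] using hS.vnormA_adjoint_apply_le_opnormA hA x
  have hTTs : vnormA A (T x) + vnormA A (Ts x) ≤ 2 * √2 * √(wA A T ^ 2 -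
      |opnormA A (ReA T Ts + ImA T Ts) ^ 2 - opnormA A (ReA T Ts - ImA T Ts) ^ 2| / 4) := by
    refine add_le_two_mul_sqrt_two_mul_sqrt ?_ (opnormA_nonneg A _)
      (opnormA_nonneg A _) (hT.opnormA_reA_add_imA_le hA)
      (hT.opnormA_reA_sub_imA_le hA)
    rw [← vnormA_reA_add_imA_apply_sq_add_sq hA]
    have hplus := hT.vnormA_reA_add_imA_apply_le hA x
    have hminus := hT.vnormA_reA_sub_imA_apply_le hA x
    rw [hx, mul_one] at hplus hminus
    exact add_le_add (pow_le_pow_left₀ (vnormA_nonneg A _) hplus 2)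
      (pow_le_pow_left₀ (vnormA_nonneg A _) hminus 2)
  calc ‖innA A (T (S x)) x‖ + ‖innA A (S (T x)) x‖
      = ‖innA A (S x) (Ts x)‖ + ‖innA A (T x) (Ss x)‖ := by
        rw [hT.innA_apply_left hA (S x) x, hS.innA_apply_left hA (T x) x]
    _ ≤ vnormA A (S x) * vnormA A (Ts x) + vnormA A (T x) * vnormA A (Ss x) :=
        add_le_add (hA.norm_innA_le _ _) (hA.norm_innA_le _ _)
    _ ≤ opnormA A S * vnormA A (Ts x) + vnormA A (T x) * opnormA A S := by
        gcongr
        · exact vnormA_nonneg A _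
        · exact vnormA_nonneg A _
    _ = opnormA A S * (vnormA A (T x) + vnormA A (Ts x)) := by ring
    _ ≤ _ := by
        rw [mul_left_comm]
        exact mul_le_mul_of_nonneg_left hTTs (opnormA_nonneg A S)

theorem stmt19 (A T Ts S Ss : H →L[ℂ] H) (hA : A.IsPositive)
    (hT : IsAAdjoint A T Ts) (hS : IsAAdjoint A S Ss) :
    wA A (T.comp S + S.comp T) ≤
        2 * Real.sqrt 2 *
          min (opnormA A S *
              Real.sqrt (wA A T ^ 2 -
                |opnormA A (ReA T Ts + ImA T Ts) ^ 2 - opnormA A (ReA T Ts - ImA T Ts) ^ 2| / 4))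
            (opnormA A T *
              Real.sqrt (wA A S ^ 2 -
                |opnormA A (ReA S Ss + ImA S Ss) ^ 2 - opnormA A (ReA S Ss - ImA S Ss) ^ 2| / 4)) ∧
      wA A (T.comp S - S.comp T) ≤
        2 * Real.sqrt 2 *
          min (opnormA A S *
              Real.sqrt (wA A T ^ 2 -
                |opnormA A (ReA T Ts + ImA T Ts) ^ 2 - opnormA A (ReA T Ts - ImA T Ts) ^ 2| / 4))
            (opnormA A T *
              Real.sqrt (wA A S ^ 2 -
                |opnormA A (ReA S Ss + ImA S Ss) ^ 2 - opnormA A (ReA S Ss - ImA S Ss) ^ 2| / 4)) := by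
  set β₁ := opnormA A S * √(wA A T ^ 2 -
    |opnormA A (ReA T Ts + ImA T Ts) ^ 2 - opnormA A (ReA T Ts - ImA T Ts) ^ 2| / 4)
  set β₂ := opnormA A T * √(wA A S ^ 2 -
    |opnormA A (ReA S Ss + ImA S Ss) ^ 2 - opnormA A (ReA S Ss - ImA S Ss) ^ 2| / 4)
  have hmin : 0 ≤ min β₁ β₂ := le_min (mul_nonneg (opnormA_nonneg A S) (Real.sqrt_nonneg _))
    (mul_nonneg (opnormA_nonneg A T) (Real.sqrt_nonneg _))
  have hbound : 0 ≤ 2 * √2 * min β₁ β₂ := mul_nonneg (by positivity) hmin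
  have hsum (x : H) (hx : vnormA A x = 1) :
      ‖innA A (T (S x)) x‖ + ‖innA A (S (T x)) x‖ ≤ 2 * √2 * min β₁ β₂ := by
    rw [mul_min_of_nonneg _ _ (by positivity)]
    refine le_min (norm_innA_comp_add_norm_innA_comp_le hA hT hS x hx) ?_
    rw [add_comm]
    exact norm_innA_comp_add_norm_innA_comp_le hA hS hT x hx
  refine ⟨wA_le hbound fun x hx => ?_, wA_le hbound fun x hx => ?_⟩
  · rw [add_apply, comp_apply, comp_apply, innA_add_left]
    exact (norm_add_le _ _).trans (hsum x hx)
  · rw [sub_apply, comp_apply, comp_apply, innA_sub_left]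
    exact (norm_sub_le _ _).trans (hsum x hx)
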